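/- arXiv:1009.4859 — 6 statements merged into one kernel-verified Lean document; each statement's English description precedes it below -/
import Mathlib

section
/- The number of 2D corner-polyominoes inscribed in a b×k rectangle equals 2·binomial(b+k-2, b-1) - 1 for all positive integers b, k. -/
/-!
A connected set of cells meeting `r` rows and `c` columns has at least `r + c - 1` cells: grow it
one adjacent cell at a time, and each new cell shares a row or a column with an old one. For a
minimal inscribed polyomino this bound is tight, so every nonempty subset `S` of it satisfies
`|S| + 1 ≤ rows(S) + cols(S)`; in particular it never contains the four corners of a rectangle.

For `b, k ≥ 2` a corner-polyomino contains `(0, 1)` or `(1, 0)`. If it misses `(0, 1)`, the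
corner is a leaf whose removal must lose row `0`, so deleting it and shifting up is a bijection
onto the corner-polyominoes of the `(b - 1) × k` rectangle; missing `(1, 0)` is the transposed
case; containing both forces the L-shape, since any other cell would close a rectangle with the
corner. Hence `P_c(b, k) = P_c(b - 1, k) + P_c(b, k - 1) + 1` with `P_c(1, k) = P_c(b, 1) = 1`,
which Pascal's rule solves.
-/

/-- Two unit cells of the plane are edge-adjacent. -/
def Adj2 (a b : ℕ × ℕ) : Prop :=
  (a.1 = b.1 ∧ (a.2 + 1 = b.2 ∨ b.2 + 1 = a.2)) ∨
  (a.2 = b.2 ∧ (a.1 + 1 = b.1 ∨ b.1 + 1 = a.1))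

/-- A set of cells is (edge-)connected. -/
def Connected2 (P : Finset (ℕ × ℕ)) : Prop :=
  ∀ a ∈ P, ∀ b ∈ P,
    Relation.ReflTransGen (fun u v => u ∈ P ∧ v ∈ P ∧ Adj2 u v) a b

/-- A set of cells is contained in a `b × k` rectangle and touches all four sides. -/
def Inscribed2 (b k : ℕ) (P : Finset (ℕ × ℕ)) : Prop :=
  (∀ c ∈ P, c.1 < b ∧ c.2 < k) ∧
  (∃ c ∈ P, c.1 = 0) ∧ (∃ c ∈ P, c.1 = b - 1) ∧
  (∃ c ∈ P, c.2 = 0) ∧ (∃ c ∈ P, c.2 = k - 1)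

/-- A corner-polyomino: a minimal (area `b+k-1`) polyomino inscribed in a `b × k`
rectangle containing the corner cell `(0,0)`. -/
def CornerPoly (b k : ℕ) (P : Finset (ℕ × ℕ)) : Prop :=
  P.Nonempty ∧ Connected2 P ∧ Inscribed2 b k P ∧ P.card = b + k - 1 ∧ (0, 0) ∈ P

open Finset

abbrev Linked (P : Finset (ℕ × ℕ)) : ℕ × ℕ → ℕ × ℕ → Prop :=
  Relation.ReflTransGen fun u v => u ∈ P ∧ v ∈ P ∧ Adj2 u v

theorem Relation.ReflTransGen.exists_rel_leaving {α : Type*} {r : α → α → Prop} {p : α → Prop}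
    {a b : α} (h : Relation.ReflTransGen r a b) (ha : p a) (hb : ¬ p b) :
    ∃ x y, p x ∧ ¬ p y ∧ r x y := by
  induction h with
  | refl => exact absurd ha hb
  | @tail c d _ hcd ih =>
    by_cases hc : p c
    · exact ⟨c, d, hc, hb, hcd⟩
    · exact ih hc

namespace Adj2

variable {a b : ℕ × ℕ}

theorem symm (h : Adj2 a b) : Adj2 b a := by unfold Adj2 at *; omega

theorem swap (h : Adj2 a b) : Adj2 a.swap b.swap := by
  unfold Adj2 at *
  simp only [Prod.fst_swap, Prod.snd_swap]
  omega

theorem fst_eq_or_snd_eq (h : Adj2 a b) : a.1 = b.1 ∨ a.2 = b.2 := by unfold Adj2 at h; omega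

theorem fst_le_succ (h : Adj2 a b) : b.1 ≤ a.1 + 1 := by unfold Adj2 at h; omega

theorem snd_le_succ (h : Adj2 a b) : b.2 ≤ a.2 + 1 := by unfold Adj2 at h; omega

theorem zero_iff {c : ℕ × ℕ} : Adj2 (0, 0) c ↔ c = (0, 1) ∨ c = (1, 0) := by
  obtain ⟨i, j⟩ := c
  simp only [Adj2, Prod.mk.injEq]
  omega

end Adj2

theorem card_image_insert_le_of_adj {S : Finset (ℕ × ℕ)} {x y : ℕ × ℕ} (hy : y ∈ S)
    (hyx : Adj2 y x) :
    #((insert x S).image Prod.fst) + #((insert x S).image Prod.snd) ≤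
      #(S.image Prod.fst) + #(S.image Prod.snd) + 1 := by
  rw [image_insert, image_insert]
  rcases hyx.fst_eq_or_snd_eq with h | h
  · rw [insert_eq_of_mem (mem_image.2 ⟨y, hy, h⟩)]
    have := card_insert_le x.2 (S.image Prod.snd)
    omega
  · rw [insert_eq_of_mem (s := S.image Prod.snd) (mem_image.2 ⟨y, hy, h⟩)]
    have := card_insert_le x.1 (S.image Prod.fst)
    omega

theorem Linked.symm {P : Finset (ℕ × ℕ)} {a b : ℕ × ℕ} (h : Linked P a b) : Linked P b a := by
  induction h with
  | refl => rfl
  | tail _ hst ih => exact ih.head ⟨hst.2.1, hst.1, hst.2.2.symm⟩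

theorem linked_of_adj_succ {P : Finset (ℕ × ℕ)} {f : ℕ → ℕ × ℕ} (hf : ∀ t, Adj2 (f t) (f (t + 1)))
    {n : ℕ} (hP : ∀ t ≤ n, f t ∈ P) : Linked P (f 0) (f n) := by
  induction n with
  | zero => rfl
  | succ n ih =>
    exact (ih fun t ht => hP t (by omega)).tail ⟨hP n (by omega), hP (n + 1) le_rfl, hf n⟩

theorem connected2_of_linked {P : Finset (ℕ × ℕ)} {r : ℕ × ℕ} (h : ∀ x ∈ P, Linked P r x) :
    Connected2 P :=
  fun a ha b hb => (h a ha).symm.trans (h b hb)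

namespace Connected2

variable {P : Finset (ℕ × ℕ)}

theorem exists_adj (hP : Connected2 P) {a x : ℕ × ℕ} (ha : a ∈ P) (hx : x ∈ P) (hxa : x ≠ a) :
    ∃ y ∈ P, Adj2 a y := by
  rcases (hP a ha x hx).cases_head with rfl | ⟨y, ⟨-, hy, hay⟩, -⟩
  · exact absurd rfl hxa
  · exact ⟨y, hy, hay⟩

theorem mem_image_of_le (hP : Connected2 P) {f : ℕ × ℕ → ℕ}
    (hf : ∀ u v, Adj2 u v → f v ≤ f u + 1) {a c : ℕ × ℕ} (ha : a ∈ P) (hc : c ∈ P) {i : ℕ}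
    (hai : f a ≤ i) (hic : i ≤ f c) : i ∈ P.image f := by
  induction hP a ha c hc with
  | refl => exact mem_image.2 ⟨a, ha, by omega⟩
  | @tail y z _ hyz ih =>
    by_cases hiy : i ≤ f y
    · exact ih hyz.1 hiy
    · exact mem_image.2 ⟨z, hyz.2.1, by have := hf y z hyz.2.2; omega⟩

theorem image_fst_eq_range (hP : Connected2 P) {b k : ℕ} (hI : Inscribed2 b k P) :
    P.image Prod.fst = range b := by
  obtain ⟨hbd, ⟨a, ha, ha1⟩, ⟨c, hc, hc1⟩, -⟩ := hI
  ext i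
  refine ⟨fun hi => ?_, fun hi => hP.mem_image_of_le (fun _ _ h => h.fst_le_succ) ha hc
    (by omega) (by have := (hbd c hc).1; rw [mem_range] at hi; omega)⟩
  obtain ⟨x, hx, rfl⟩ := mem_image.1 hi
  exact mem_range.2 (hbd x hx).1

theorem image_snd_eq_range (hP : Connected2 P) {b k : ℕ} (hI : Inscribed2 b k P) :
    P.image Prod.snd = range k := by
  obtain ⟨hbd, -, -, ⟨a, ha, ha1⟩, ⟨c, hc, hc1⟩⟩ := hI
  ext j
  refine ⟨fun hj => ?_, fun hj => hP.mem_image_of_le (fun _ _ h => h.snd_le_succ) ha hc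
    (by omega) (by have := (hbd c hc).2; rw [mem_range] at hj; omega)⟩
  obtain ⟨x, hx, rfl⟩ := mem_image.1 hj
  exact mem_range.2 (hbd x hx).2

theorem image {f : ℕ × ℕ → ℕ × ℕ} (hP : Connected2 P)
    (hf : ∀ u ∈ P, ∀ v ∈ P, Adj2 u v → Adj2 (f u) (f v)) : Connected2 (P.image f) := by
  intro a ha b hb
  obtain ⟨a, ha', rfl⟩ := mem_image.1 ha
  obtain ⟨b, hb', rfl⟩ := mem_image.1 hb
  refine Relation.ReflTransGen.lift f ?_ _ _ (hP a ha' b hb')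
  rintro u v ⟨hu, hv, huv⟩
  exact ⟨mem_image_of_mem f hu, mem_image_of_mem f hv, hf u hu v hv huv⟩

theorem insert_of_adj (hP : Connected2 P) {z w : ℕ × ℕ} (hw : w ∈ P) (hzw : Adj2 z w) :
    Connected2 (insert z P) := by
  have hroot : ∀ x ∈ insert z P, Linked (insert z P) w x := by
    intro x hx
    rcases mem_insert.1 hx with rfl | hx
    · exact .single ⟨mem_insert_of_mem hw, mem_insert_self _ _, hzw.symm⟩
    · refine Relation.ReflTransGen.mono ?_ _ _ (hP w hw x hx)
      rintro u v ⟨hu, hv, huv⟩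
      exact ⟨mem_insert_of_mem hu, mem_insert_of_mem hv, huv⟩
  exact connected2_of_linked hroot

/-- A path through `z` can be rerouted through its unique neighbour `w`: collapse `z` onto `w`. -/
theorem erase_of_unique_adj (hP : Connected2 P) {z w : ℕ × ℕ} (hz : ∀ y ∈ P, Adj2 z y → y = w) :
    Connected2 (P.erase z) := by
  let g : ℕ × ℕ → ℕ × ℕ := fun x => if x = z then w else x
  have hg : ∀ {u v}, Linked P u v → Linked (P.erase z) (g u) (g v) := by
    intro u v h
    induction h with
    | refl => rfl
    | @tail x y _ hxy ih =>
      refine ih.trans ?_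
      obtain ⟨hx, hy, hadj⟩ := hxy
      by_cases hxz : x = z <;> by_cases hyz : y = z
      · simp only [g, if_pos hxz, if_pos hyz]; rfl
      · simp only [g, if_pos hxz, hz y hy (hxz ▸ hadj), ite_self]; rfl
      · simp only [g, if_pos hyz, hz x hx (hyz ▸ hadj.symm), ite_self]; rfl
      · simp only [g, hxz, hyz, if_false]
        exact .single ⟨mem_erase.2 ⟨hxz, hx⟩, mem_erase.2 ⟨hyz, hy⟩, hadj⟩
  intro a ha b hb
  have := hg (hP a (mem_of_mem_erase ha) b (mem_of_mem_erase hb))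
  simpa only [g, if_neg (ne_of_mem_erase ha), if_neg (ne_of_mem_erase hb)] using this

theorem card_image_add_card_image_add_card_le (hP : Connected2 P) {S : Finset (ℕ × ℕ)}
    (hSP : S ⊆ P) (hS : S.Nonempty) :
    #(P.image Prod.fst) + #(P.image Prod.snd) + #S ≤
      #(S.image Prod.fst) + #(S.image Prod.snd) + #P := by
  induction h : #(P \ S) generalizing S with
  | zero =>
    rw [card_eq_zero, sdiff_eq_empty_iff_subset] at h
    rw [Subset.antisymm hSP h]
  | succ n ih =>
    obtain ⟨z, hz⟩ : (P \ S).Nonempty := card_pos.1 (by omega)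
    obtain ⟨s, hs⟩ := hS
    obtain ⟨y, x, hy, hx, -, hxP, hyx⟩ :=
      (hP s (hSP hs) z (mem_sdiff.1 hz).1).exists_rel_leaving (p := (· ∈ S)) hs
        (mem_sdiff.1 hz).2
    have hgrow := ih (insert_subset hxP hSP) (insert_nonempty x S) (by
      rw [sdiff_insert, card_erase_of_mem (mem_sdiff.2 ⟨hxP, hx⟩), h]; rfl)
    have := card_image_insert_le_of_adj hy hyx
    rw [card_insert_of_notMem hx] at hgrow
    omega

theorem card_image_fst_add_card_image_snd_le (hP : Connected2 P) (hne : P.Nonempty) :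
    #(P.image Prod.fst) + #(P.image Prod.snd) ≤ #P + 1 := by
  obtain ⟨a, ha⟩ := hne
  have := hP.card_image_add_card_image_add_card_le (singleton_subset_iff.2 ha)
    (singleton_nonempty a)
  simp only [image_singleton, card_singleton] at this
  omega

end Connected2

namespace CornerPoly

variable {b k : ℕ} {P : Finset (ℕ × ℕ)}

theorem one_le_left (h : CornerPoly b k P) : 1 ≤ b := by
  have := (h.2.2.1.1 _ h.2.2.2.2).1
  omega

theorem one_le_right (h : CornerPoly b k P) : 1 ≤ k := by
  have := (h.2.2.1.1 _ h.2.2.2.2).2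
  omega

theorem card_add_one_le (h : CornerPoly b k P) {S : Finset (ℕ × ℕ)} (hSP : S ⊆ P)
    (hS : S.Nonempty) : #S + 1 ≤ #(S.image Prod.fst) + #(S.image Prod.snd) := by
  have hb := h.one_le_left
  obtain ⟨-, hconn, hI, hcard, -⟩ := h
  have := hconn.card_image_add_card_image_add_card_le hSP hS
  rw [hconn.image_fst_eq_range hI, hconn.image_snd_eq_range hI, card_range, card_range,
    hcard] at this
  omega

theorem not_rectangle (h : CornerPoly b k P) {i i' j j' : ℕ} (hi : i ≠ i') (hj : j ≠ j')
    (h1 : (i, j) ∈ P) (h2 : (i, j') ∈ P) (h3 : (i', j) ∈ P) : (i', j') ∉ P := by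
  intro h4
  let S : Finset (ℕ × ℕ) := {(i, j), (i, j'), (i', j), (i', j')}
  have hS : #S = 4 := by simp [S, card_insert_of_notMem, hi, hj]
  have hfst : #(S.image Prod.fst) ≤ 2 :=
    (card_le_card (show S.image Prod.fst ⊆ {i, i'} by simp [S])).trans
      card_le_two
  have hsnd : #(S.image Prod.snd) ≤ 2 :=
    (card_le_card (show S.image Prod.snd ⊆ {j, j'} by simp [S])).trans
      card_le_two
  have := h.card_add_one_le (S := S) (by simp [S, insert_subset_iff, *]) (by simp [S])
  omega

end CornerPoly

def lShape (b k : ℕ) : Finset (ℕ × ℕ) := range b ×ˢ {0} ∪ {0} ×ˢ range k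

section lShape

variable {b k : ℕ}

theorem mem_lShape {x : ℕ × ℕ} : x ∈ lShape b k ↔ x.1 < b ∧ x.2 = 0 ∨ x.1 = 0 ∧ x.2 < k := by
  simp only [lShape, mem_union, mem_product, mem_range, mem_singleton]

theorem card_lShape (hb : 1 ≤ b) (hk : 1 ≤ k) : #(lShape b k) = b + k - 1 := by
  have hinter : range b ×ˢ {0} ∩ {0} ×ˢ range k = {(0, 0)} := by
    ext ⟨i, j⟩
    simp only [mem_inter, mem_product, mem_range, mem_singleton, Prod.mk.injEq]
    omega
  have := card_union_add_card_inter (range b ×ˢ {0}) ({0} ×ˢ range k)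
  simp only [hinter, card_product, card_range, card_singleton] at this
  rw [lShape]
  omega

theorem cornerPoly_lShape (hb : 1 ≤ b) (hk : 1 ≤ k) : CornerPoly b k (lShape b k) := by
  have hroot : (0, 0) ∈ lShape b k := mem_lShape.2 (Or.inl ⟨hb, rfl⟩)
  refine ⟨⟨_, hroot⟩, connected2_of_linked (r := (0, 0)) fun x hx => ?_,
    ⟨fun x hx => ?_, ⟨_, hroot, rfl⟩, ⟨(b - 1, 0), mem_lShape.2 (Or.inl ⟨by omega, rfl⟩), rfl⟩,
    ⟨_, hroot, rfl⟩, ⟨(0, k - 1), mem_lShape.2 (Or.inr ⟨rfl, by omega⟩), rfl⟩⟩, card_lShape hb hk, hroot⟩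
  · obtain ⟨i, j⟩ := x
    rcases mem_lShape.1 hx with ⟨hi, rfl⟩ | ⟨rfl, hj⟩
    · exact linked_of_adj_succ (f := fun t => (t, 0)) (fun t => Or.inr ⟨rfl, Or.inl rfl⟩)
        fun t ht => mem_lShape.2 (Or.inl ⟨by simp only at hi; omega, rfl⟩)
    · exact linked_of_adj_succ (f := fun t => (0, t)) (fun t => Or.inl ⟨rfl, Or.inl rfl⟩)
        fun t ht => mem_lShape.2 (Or.inr ⟨rfl, by simp only at hj; omega⟩)
  · have := mem_lShape.1 hx
    omega

theorem CornerPoly.eq_lShape {P : Finset (ℕ × ℕ)} (h : CornerPoly b k P)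
    (hsub : P ⊆ lShape b k) : P = lShape b k :=
  eq_of_subset_of_card_le hsub (by rw [card_lShape h.one_le_left h.one_le_right, h.2.2.2.1])

theorem setOf_cornerPoly_eq_singleton (hb : 1 ≤ b) (hk : 1 ≤ k)
    (hsub : ∀ P, CornerPoly b k P → P ⊆ lShape b k) : {P | CornerPoly b k P} = {lShape b k} :=
  Set.ext fun P => ⟨fun h => h.eq_lShape (hsub P h), fun h => h ▸ cornerPoly_lShape hb hk⟩

theorem CornerPoly.subset_lShape {P : Finset (ℕ × ℕ)} (h : CornerPoly b k P)
    (h01 : (0, 1) ∈ P) (h10 : (1, 0) ∈ P) : P ⊆ lShape b k := by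
  have harm : ∀ x, Linked P (0, 0) x → x.1 = 0 ∨ x.2 = 0 := by
    intro x hx
    induction hx with
    | refl => simp
    | @tail y z _ hyz ih =>
      obtain ⟨hy, hz, hadj⟩ := hyz
      obtain ⟨y1, y2⟩ := y
      obtain ⟨z1, z2⟩ := z
      simp only [Adj2] at ih hadj ⊢
      by_contra! hne
      rcases ih with rfl | rfl
      · obtain ⟨rfl, rfl⟩ : z1 = 1 ∧ z2 = y2 := by omega
        exact h.not_rectangle zero_ne_one (Ne.symm hne.2) h.2.2.2.2 hy h10 hz
      · obtain ⟨rfl, rfl⟩ : z2 = 1 ∧ z1 = y1 := by omega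
        exact h.not_rectangle (Ne.symm hne.1) zero_ne_one h.2.2.2.2 h01 hy hz
  intro x hx
  have := harm x (h.2.1 _ h.2.2.2.2 _ hx)
  have := h.2.2.1.1 x hx
  exact mem_lShape.2 (by omega)

end lShape

theorem Finset.image_erase_of_apply_eq {α β : Type*} [DecidableEq α] [DecidableEq β]
    {f : α → β} {s : Finset α} {a a' : α} (ha' : a' ∈ s) (hne : a' ≠ a) (heq : f a' = f a) :
    (s.erase a).image f = s.image f := by
  refine (image_subset_image (erase_subset a s)).antisymm fun y hy => ?_
  obtain ⟨x, hx, rfl⟩ := mem_image.1 hy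
  by_cases hxa : x = a
  · exact mem_image.2 ⟨a', mem_erase.2 ⟨hne, ha'⟩, hxa ▸ heq⟩
  · exact mem_image_of_mem f (mem_erase.2 ⟨hxa, hx⟩)

theorem Connected2.erase_zero_zero {P : Finset (ℕ × ℕ)} (hP : Connected2 P) (h01 : (0, 1) ∉ P) :
    Connected2 (P.erase (0, 0)) :=
  hP.erase_of_unique_adj fun _ hy hadj =>
    (Adj2.zero_iff.1 hadj).resolve_left fun h => h01 (h ▸ hy)

def attachCorner (Q : Finset (ℕ × ℕ)) : Finset (ℕ × ℕ) :=
  insert (0, 0) (Q.image fun c => (c.1 + 1, c.2))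

section attachCorner

variable {b k : ℕ} {P Q : Finset (ℕ × ℕ)}

theorem fst_add_one_injective : Function.Injective fun c : ℕ × ℕ => (c.1 + 1, c.2) :=
  fun _ _ h => Prod.ext (by simpa using congrArg Prod.fst h) (by simpa using congrArg Prod.snd h)

theorem attachCorner_injective : Function.Injective attachCorner := by
  intro Q Q' h
  have h0 : ∀ R : Finset (ℕ × ℕ), (0, 0) ∉ R.image fun c => (c.1 + 1, c.2) := by simp
  have := congrArg (·.erase (0, 0)) h
  simp only [attachCorner, erase_insert (h0 _)] at this
  exact image_injective fst_add_one_injective this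

theorem zero_one_notMem_attachCorner : (0, 1) ∉ attachCorner Q := by simp [attachCorner]

theorem cornerPoly_attachCorner (h : CornerPoly b k Q) :
    CornerPoly (b + 1) k (attachCorner Q) := by
  have hb := h.one_le_left
  have hk := h.one_le_right
  obtain ⟨-, hconn, ⟨hbd, -, ⟨c, hc, hc1⟩, -, ⟨d, hd, hd2⟩⟩, hcard, hroot⟩ := h
  have hup : ∀ x ∈ Q, (x.1 + 1, x.2) ∈ attachCorner Q :=
    fun x hx => mem_insert_of_mem (mem_image_of_mem _ hx)
  have h00 : (0, 0) ∈ attachCorner Q := mem_insert_self _ _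
  refine ⟨⟨_, h00⟩, ?_, ⟨fun x hx => ?_, ⟨_, h00, rfl⟩, ⟨_, hup c hc, by simp only; omega⟩,
    ⟨_, h00, rfl⟩, ⟨_, hup d hd, hd2⟩⟩, ?_, h00⟩
  · refine (hconn.image fun u _ v _ huv => ?_).insert_of_adj (mem_image_of_mem _ hroot)
      (Or.inr ⟨rfl, Or.inl rfl⟩)
    unfold Adj2 at huv ⊢
    omega
  · rcases mem_insert.1 hx with rfl | hx
    · exact ⟨by omega, by omega⟩
    · obtain ⟨y, hy, rfl⟩ := mem_image.1 hx
      have := hbd y hy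
      exact ⟨by omega, this.2⟩
  · rw [attachCorner, card_insert_of_notMem (by simp),
      card_image_of_injective _ fst_add_one_injective, hcard]
    omega

theorem CornerPoly.one_zero_mem (h : CornerPoly b k P) (hb : 2 ≤ b) (h01 : (0, 1) ∉ P) :
    (1, 0) ∈ P := by
  obtain ⟨-, hconn, ⟨-, -, ⟨c, hc, hc1⟩, -⟩, -, hroot⟩ := h
  obtain ⟨y, hy, hadj⟩ := hconn.exists_adj hroot hc (by rintro rfl; simp only at hc1; omega)
  rcases Adj2.zero_iff.1 hadj with rfl | rfl
  · exact absurd hy h01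
  · exact hy

/-- Otherwise removing the leaf `(0, 0)` would leave a connected set spanning the same rows and
columns with one cell fewer, against the lower bound. -/
theorem CornerPoly.one_le_fst (h : CornerPoly b k P) (hb : 2 ≤ b) (h01 : (0, 1) ∉ P) :
    ∀ x ∈ P.erase (0, 0), 1 ≤ x.1 := by
  intro x hx
  by_contra! hx1
  have h10 := h.one_zero_mem hb h01
  obtain ⟨-, hconn, hI, hcard, hroot⟩ := h
  have hLB := (hconn.erase_zero_zero h01).card_image_fst_add_card_image_snd_le ⟨x, hx⟩
  rw [image_erase_of_apply_eq (mem_of_mem_erase hx) (ne_of_mem_erase hx) (by simp only; omega),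
    image_erase_of_apply_eq (f := Prod.snd) (a := (0, 0)) h10 (by simp) rfl,
    hconn.image_fst_eq_range hI, hconn.image_snd_eq_range hI, card_erase_of_mem hroot, hcard,
    card_range, card_range] at hLB
  omega

theorem CornerPoly.exists_eq_attachCorner (h : CornerPoly (b + 1) k P) (hb : 1 ≤ b)
    (h01 : (0, 1) ∉ P) : ∃ Q, CornerPoly b k Q ∧ P = attachCorner Q := by
  have hpos := h.one_le_fst (by omega) h01
  have h10 := h.one_zero_mem (by omega) h01
  obtain ⟨-, hconn, ⟨hbd, -, ⟨c, hc, hc1⟩, -, ⟨d, hd, hd2⟩⟩, hcard, hroot⟩ := h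
  let dn : ℕ × ℕ → ℕ × ℕ := fun c => (c.1 - 1, c.2)
  have hmem : ∀ x ∈ P, x ≠ (0, 0) → dn x ∈ (P.erase (0, 0)).image dn :=
    fun x hx hx0 => mem_image_of_mem _ (mem_erase.2 ⟨hx0, hx⟩)
  have h00 : (0, 0) ∈ (P.erase (0, 0)).image dn := hmem _ h10 (by simp)
  refine ⟨(P.erase (0, 0)).image dn, ⟨⟨_, h00⟩, ?_, ⟨fun x hx => ?_, ⟨_, h00, rfl⟩,
    ⟨dn c, hmem c hc ?_, ?_⟩, ⟨_, h00, rfl⟩, ?_⟩, ?_, h00⟩, ?_⟩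
  · refine (hconn.erase_zero_zero h01).image fun u hu v hv huv => ?_
    have := hpos u hu
    have := hpos v hv
    unfold Adj2 at huv ⊢
    simp only [dn]
    omega
  · obtain ⟨y, hy, rfl⟩ := mem_image.1 hx
    have := hbd y (mem_of_mem_erase hy)
    exact ⟨by simp only [dn]; omega, this.2⟩
  · rintro rfl
    simp only at hc1
    omega
  · simp only [dn]
    omega
  · by_cases hd0 : d = (0, 0)
    · exact ⟨_, h00, by simpa [hd0] using hd2⟩
    · exact ⟨dn d, hmem d hd hd0, hd2⟩
  · rw [card_image_of_injOn, card_erase_of_mem hroot, hcard]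
    · omega
    · intro x hx y hy hxy
      have := hpos x hx
      have := hpos y hy
      simp only [dn, Prod.mk.injEq] at hxy
      exact Prod.ext (by omega) hxy.2
  · rw [attachCorner, image_image, image_congr (g := id), image_id, insert_erase hroot]
    intro x hx
    have := hpos x hx
    exact Prod.ext (by simp only [dn, Function.comp, id]; omega) rfl

theorem ncard_setOf_cornerPoly_zero_one_notMem (hb : 1 ≤ b) :
    {P | CornerPoly (b + 1) k P ∧ (0, 1) ∉ P}.ncard = {Q | CornerPoly b k Q}.ncard := by
  have : {P | CornerPoly (b + 1) k P ∧ (0, 1) ∉ P} = attachCorner '' {Q | CornerPoly b k Q} := by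
    ext P
    constructor
    · rintro ⟨h, h01⟩
      obtain ⟨Q, hQ, rfl⟩ := h.exists_eq_attachCorner hb h01
      exact ⟨Q, hQ, rfl⟩
    · rintro ⟨Q, hQ, rfl⟩
      exact ⟨cornerPoly_attachCorner hQ, zero_one_notMem_attachCorner⟩
  rw [this, Set.ncard_image_of_injective _ attachCorner_injective]

end attachCorner

theorem finite_setOf_cornerPoly (b k : ℕ) : {P | CornerPoly b k P}.Finite :=
  (range b ×ˢ range k).powerset.finite_toSet.subset fun P hP => by
    simp only [coe_powerset, Set.mem_preimage, Set.mem_powerset_iff, coe_subset]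
    exact fun x hx => mem_product.2 (by simpa using hP.2.2.1.1 x hx)

theorem image_swap_involutive : Function.Involutive fun P : Finset (ℕ × ℕ) => P.image Prod.swap :=
  fun P => by simp [image_image]

theorem ncard_preimage_image_swap (s : Set (Finset (ℕ × ℕ))) :
    ((fun P : Finset (ℕ × ℕ) => P.image Prod.swap) ⁻¹' s).ncard = s.ncard :=
  Set.ncard_preimage_of_injective_subset_range image_swap_involutive.injective
    (image_swap_involutive.surjective.range_eq ▸ Set.subset_univ s)

theorem CornerPoly.image_swap {b k : ℕ} {P : Finset (ℕ × ℕ)} (h : CornerPoly b k P) :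
    CornerPoly k b (P.image Prod.swap) := by
  obtain ⟨hne, hconn, ⟨hbd, ⟨c, hc, hc1⟩, ⟨c', hc', hc1'⟩, ⟨d, hd, hd2⟩, ⟨d', hd', hd2'⟩⟩,
    hcard, hroot⟩ := h
  refine ⟨hne.image _, hconn.image fun _ _ _ _ huv => huv.swap, ⟨fun x hx => ?_,
    ⟨_, mem_image_of_mem _ hd, hd2⟩, ⟨_, mem_image_of_mem _ hd', hd2'⟩,
    ⟨_, mem_image_of_mem _ hc, hc1⟩, ⟨_, mem_image_of_mem _ hc', hc1'⟩⟩, ?_,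
    mem_image_of_mem Prod.swap hroot⟩
  · obtain ⟨y, hy, rfl⟩ := mem_image.1 hx
    exact (hbd y hy).symm
  · rw [card_image_of_injective _ Prod.swap_injective, hcard, add_comm]

theorem cornerPoly_image_swap_iff {b k : ℕ} {P : Finset (ℕ × ℕ)} :
    CornerPoly k b (P.image Prod.swap) ↔ CornerPoly b k P :=
  ⟨fun h => image_swap_involutive P ▸ h.image_swap, CornerPoly.image_swap⟩

theorem ncard_setOf_cornerPoly_comm (b k : ℕ) :
    {P | CornerPoly b k P}.ncard = {P | CornerPoly k b P}.ncard := by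
  rw [← ncard_preimage_image_swap]
  simp only [Set.preimage_ofPred_eq, cornerPoly_image_swap_iff]

theorem ncard_setOf_cornerPoly_one_zero_notMem (b k : ℕ) :
    {P | CornerPoly b k P ∧ (1, 0) ∉ P}.ncard = {P | CornerPoly k b P ∧ (0, 1) ∉ P}.ncard := by
  rw [← ncard_preimage_image_swap]
  simp [cornerPoly_image_swap_iff]

theorem ncard_setOf_cornerPoly_add_one_add_one {b k : ℕ} (hb : 1 ≤ b) (hk : 1 ≤ k) :
    {P | CornerPoly (b + 1) (k + 1) P}.ncard =
      {P | CornerPoly b (k + 1) P}.ncard + {P | CornerPoly (b + 1) k P}.ncard + 1 := by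
  set S := {P | CornerPoly (b + 1) (k + 1) P}
  set T₁ := {P : Finset (ℕ × ℕ) | (1, 0) ∉ P}
  set T₂ := {P : Finset (ℕ × ℕ) | (0, 1) ∉ P}
  have hS := finite_setOf_cornerPoly (b + 1) (k + 1)
  have hsplit₁ := Set.ncard_inter_add_ncard_sdiff_eq_ncard S T₁ hS
  have hsplit₂ := Set.ncard_inter_add_ncard_sdiff_eq_ncard (S \ T₁) T₂ hS.sdiff
  have hA : (S \ T₁) ∩ T₂ = {P | CornerPoly (b + 1) (k + 1) P ∧ (0, 1) ∉ P} := by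
    ext P
    simp only [S, T₁, T₂, Set.mem_inter_iff, Set.mem_sdiff, Set.mem_ofPred_eq, not_not]
    exact ⟨fun ⟨⟨h, _⟩, h01⟩ => ⟨h, h01⟩,
      fun ⟨h, h01⟩ => ⟨⟨h, h.one_zero_mem (by omega) h01⟩, h01⟩⟩
  have hD : (S \ T₁) \ T₂ = {lShape (b + 1) (k + 1)} := by
    ext P
    simp only [S, T₁, T₂, Set.mem_sdiff, Set.mem_ofPred_eq, not_not, Set.mem_singleton_iff]
    refine ⟨fun ⟨⟨h, h10⟩, h01⟩ => h.eq_lShape (h.subset_lShape h01 h10), ?_⟩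
    rintro rfl
    exact ⟨⟨cornerPoly_lShape (by omega) (by omega), mem_lShape.2 (by omega)⟩,
      mem_lShape.2 (by omega)⟩
  rw [hA, ncard_setOf_cornerPoly_zero_one_notMem hb, hD, Set.ncard_singleton] at hsplit₂
  have hC : (S ∩ T₁).ncard = {P | CornerPoly (b + 1) k P}.ncard := by
    rw [show S ∩ T₁ = {P | CornerPoly (b + 1) (k + 1) P ∧ (1, 0) ∉ P} from rfl,
      ncard_setOf_cornerPoly_one_zero_notMem, ncard_setOf_cornerPoly_zero_one_notMem hk,
      ncard_setOf_cornerPoly_comm]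
  omega

theorem ncard_setOf_cornerPoly_add_one (b k : ℕ) :
    {P | CornerPoly (b + 1) (k + 1) P}.ncard = 2 * (b + k).choose b - 1 := by
  induction b generalizing k with
  | zero =>
    rw [setOf_cornerPoly_eq_singleton le_rfl (by omega)
      fun P h x hx => mem_lShape.2 (by have := h.2.2.1.1 x hx; omega)]
    simp
  | succ b ihb =>
    induction k with
    | zero =>
      rw [setOf_cornerPoly_eq_singleton (by omega) le_rfl
        fun P h x hx => mem_lShape.2 (by have := h.2.2.1.1 x hx; omega)]
      simp
    | succ k ihk =>
      have hpascal : (b + 1 + (k + 1)).choose (b + 1) =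
          (b + (k + 1)).choose b + (b + 1 + k).choose (b + 1) := by
        rw [show b + 1 + (k + 1) = b + (k + 1) + 1 by omega, Nat.choose_succ_succ',
          show b + (k + 1) = b + 1 + k by omega]
      have := Nat.choose_pos (show b ≤ b + (k + 1) by omega)
      have := Nat.choose_pos (show b + 1 ≤ b + 1 + k by omega)
      rw [ncard_setOf_cornerPoly_add_one_add_one (by omega) (by omega), ihb, ihk, hpascal]
      omega

/-- The number of 2D corner-polyominoes inscribed in a `b × k` rectangle is
`2 * C(b+k-2, b-1) - 1`. -/
theorem corner_poly_count (b k : ℕ) (hb : 1 ≤ b) (hk : 1 ≤ k) :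
    {P : Finset (ℕ × ℕ) | CornerPoly b k P}.ncard =
      2 * Nat.choose (b + k - 2) (b - 1) - 1 := by
  obtain ⟨b, rfl⟩ := Nat.exists_eq_add_of_le' hb
  obtain ⟨k, rfl⟩ := Nat.exists_eq_add_of_le' hk
  rw [ncard_setOf_cornerPoly_add_one]
  congr 3
  omega
end

section
/- For integers b,k,h ≥ 3, the number of skew cross polyominoes inscribed in a b×k×h prism equals 64 · Σ_{i=0}^{b+k-6} Σ_{r=0}^{i} Σ_{j=0}^{b-3-r} binomial(b, 3+r+j)·binomial(k, 3+i+j-r)·binomial(h, 3+i), where this is the coefficient of x^b y^k z^h in 64x³y³z³/((1-x-y)(1-x-z)(1-y-z)(1-x)²(1-y)²(1-z)²). -/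
/-!
Put `a = x/(1-x)`, `b = y/(1-y)`, `c = z/(1-z)`. Then `1 - x - y = (1-x)(1-y)(1 - ab)` and
likewise for the other two quadratic factors, so
`x³y³z³/D = Σ_{s,r,t} x^(3+t+s)/(1-x)^(4+t+s) · y^(3+t+r)/(1-y)^(4+t+r) · z^(3+s+r)/(1-z)^(4+s+r)`,
where `D` is the denominator, and the coefficient of `x^n` in `x^j/(1-x)^(j+1)` is `C(n, j)`.
Truncating the three geometric series at `N` changes the series only by multiples of `x^N` and
`y^N`, so for `N > b, k` the coefficient is the box sum
`Σ_{s,r,t<N} C(b,3+t+s) C(k,3+t+r) C(h,3+s+r)`. The stated sum is this one with its vanishing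
terms dropped, after the substitution `i = s + r`.
-/

open Finset

namespace PowerSeries

variable {R : Type*} [CommRing R]

noncomputable def chooseSeries (j : ℕ) : PowerSeries R := mk fun n => (n.choose j : R)

@[simp]
theorem coeff_chooseSeries (j n : ℕ) : coeff n (chooseSeries j : PowerSeries R) = n.choose j :=
  coeff_mk _ _

theorem chooseSeries_mul_one_sub_X_pow (j : ℕ) :
    (chooseSeries j : PowerSeries R) * (1 - X) ^ (j + 1) = X ^ j := by
  have : (chooseSeries j : PowerSeries R) = X ^ j * mk fun n => ((j + n).choose j : R) := by
    ext n
    rw [coeff_chooseSeries, coeff_X_pow_mul', coeff_mk]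
    split_ifs with h
    · rw [Nat.add_sub_cancel' h]
    · rw [Nat.choose_eq_zero_of_lt (by omega), Nat.cast_zero]
  rw [this, mul_assoc, mk_add_choose_mul_one_sub_pow_eq_one, mul_one]

end PowerSeries

namespace MvPowerSeries

section PureTensor

variable {σ R : Type*} [Fintype σ] [CommRing R]

/-- The series `∏ i, f i (X i)`. -/
noncomputable def pureTensor (f : σ → PowerSeries R) : MvPowerSeries σ R :=
  fun d => ∏ i, PowerSeries.coeff (d i) (f i)

theorem coeff_pureTensor (f : σ → PowerSeries R) (d : σ →₀ ℕ) :
    coeff d (pureTensor f) = ∏ i, PowerSeries.coeff (d i) (f i) := rfl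

variable [DecidableEq σ]

theorem coeff_pureTensor_update (f : σ → PowerSeries R) (i : σ) (g : PowerSeries R)
    (d : σ →₀ ℕ) :
    coeff d (pureTensor (Function.update f i g)) =
      PowerSeries.coeff (d i) g * ∏ j ∈ {i}ᶜ, PowerSeries.coeff (d j) (f j) := by
  rw [coeff_pureTensor, Fintype.prod_eq_mul_prod_compl i, Function.update_self]
  congr 1
  refine prod_congr rfl fun j hj => ?_
  rw [Function.update_of_ne (by simpa using hj)]

theorem pureTensor_mul_one_sub_X (f : σ → PowerSeries R) (i : σ) :
    pureTensor f * (1 - X i) =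
      pureTensor (Function.update f i (f i * (1 - PowerSeries.X))) := by
  ext d
  have hf := coeff_pureTensor_update f i (f i)
  rw [Function.update_eq_self] at hf
  simp only [coeff_pureTensor_update, mul_sub, mul_one, map_sub, sub_mul]
  rw [X, coeff_mul_monomial, hf]
  congr 1
  rcases hd : d i with _ | n
  · rw [if_neg (by simp [Finsupp.single_le_iff, hd]), PowerSeries.coeff_zero_mul_X, zero_mul]
  · rw [if_pos (by simp [Finsupp.single_le_iff, hd]), mul_one, hf, PowerSeries.coeff_succ_mul_X,
      Finsupp.tsub_apply, hd, Finsupp.single_eq_same, Nat.add_sub_cancel]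
    congr 1
    refine prod_congr rfl fun j hj => ?_
    rw [Finsupp.tsub_apply, Finsupp.single_eq_of_ne (by simpa using hj), Nat.sub_zero]

theorem pureTensor_mul_one_sub_X_pow (f : σ → PowerSeries R) (i : σ) (n : ℕ) :
    pureTensor f * (1 - X i) ^ n =
      pureTensor (Function.update f i (f i * (1 - PowerSeries.X) ^ n)) := by
  induction n with
  | zero => simp
  | succ n ih =>
    rw [pow_succ, ← mul_assoc, ih, pureTensor_mul_one_sub_X, Function.update_idem,
      Function.update_self, mul_assoc, ← pow_succ]

theorem pureTensor_mul_prod_one_sub_X_pow (f : σ → PowerSeries R) (e : σ → ℕ) :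
    pureTensor f * ∏ i, (1 - X i) ^ e i =
      pureTensor fun i => f i * (1 - PowerSeries.X) ^ e i := by
  suffices ∀ s : Finset σ, pureTensor f * ∏ i ∈ s, (1 - X i) ^ e i =
      pureTensor (s.piecewise (fun i => f i * (1 - PowerSeries.X) ^ e i) f) by
    simpa using this univ
  intro s
  induction s using Finset.induction_on with
  | empty => simp
  | insert a s ha ih =>
    rw [prod_insert ha, mul_left_comm, mul_comm, ih, pureTensor_mul_one_sub_X_pow,
      piecewise_insert, piecewise_eq_of_notMem _ _ _ ha]

theorem pureTensor_X_pow (e : σ → ℕ) :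
    pureTensor (fun i => (PowerSeries.X : PowerSeries R) ^ e i) = ∏ i, X i ^ e i := by
  have : ∏ i, X i ^ e i = monomial (Finsupp.equivFunOnFinite.symm e) (1 : R) := by
    rw [monomial_one_eq, Finsupp.prod_fintype _ _ (fun _ => pow_zero _)]
    rfl
  ext d
  simp only [this, coeff_pureTensor, PowerSeries.coeff_X_pow, Fintype.prod_boole, coeff_monomial,
    Finsupp.ext_iff, Finsupp.equivFunOnFinite_symm_apply_apply]

end PureTensor

theorem pureTensor_chooseSeries {σ k : Type*} [Fintype σ] [DecidableEq σ] [Field k]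
    (e : σ → ℕ) :
    pureTensor (fun i => PowerSeries.chooseSeries (e i)) =
      ∏ i, X i ^ e i * (1 - X i : MvPowerSeries σ k)⁻¹ ^ (e i + 1) := by
  have h := pureTensor_mul_prod_one_sub_X_pow
    (fun i => (PowerSeries.chooseSeries (e i) : PowerSeries k)) fun i => e i + 1
  simp only [PowerSeries.chooseSeries_mul_one_sub_X_pow, pureTensor_X_pow] at h
  have hunit :
      (∏ i, (1 - X i) ^ (e i + 1)) * ∏ i, (1 - X i : MvPowerSeries σ k)⁻¹ ^ (e i + 1) = 1 := by
    rw [← prod_mul_distrib]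
    exact prod_eq_one fun i _ => by
      rw [← mul_pow, MvPowerSeries.mul_inv_cancel _ (by simp), one_pow]
  rw [prod_mul_distrib, ← h, mul_assoc, hunit, mul_one]

theorem coeff_mul_one_sub_of_X_pow_dvd {σ R : Type*} [CommRing R] (F : MvPowerSeries σ R)
    {A : MvPowerSeries σ R} {i : σ} {n : ℕ} (hA : X i ^ n ∣ A) {d : σ →₀ ℕ} (hd : d i < n) :
    coeff d (F * (1 - A)) = coeff d F := by
  rw [mul_sub, mul_one, map_sub, X_pow_dvd_iff.mp (hA.mul_left F) d hd, sub_zero]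

end MvPowerSeries

theorem truncated_expansion_mul_skewCrossDenom {R : Type*} [CommRing R] {x y z u v w : R}
    (hu : u * (1 - x) = 1) (hv : v * (1 - y) = 1) (hw : w * (1 - z) = 1) (N : ℕ) :
    (∑ s ∈ range N, ∑ r ∈ range N, ∑ t ∈ range N,
        x ^ (3 + t + s) * u ^ (3 + t + s + 1) * (y ^ (3 + t + r) * v ^ (3 + t + r + 1)) *
          (z ^ (3 + s + r) * w ^ (3 + s + r + 1))) *
      ((1 - x - y) * (1 - x - z) * (1 - y - z) * (1 - x) ^ 2 * (1 - y) ^ 2 * (1 - z) ^ 2) =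
    x ^ 3 * y ^ 3 * z ^ 3 *
      ((1 - (x * u * (y * v)) ^ N) * (1 - (x * u * (z * w)) ^ N) *
        (1 - (y * v * (z * w)) ^ N)) := by
  have hsum : ∑ s ∈ range N, ∑ r ∈ range N, ∑ t ∈ range N,
        x ^ (3 + t + s) * u ^ (3 + t + s + 1) * (y ^ (3 + t + r) * v ^ (3 + t + r + 1)) *
          (z ^ (3 + s + r) * w ^ (3 + s + r + 1)) =
      x ^ 3 * y ^ 3 * z ^ 3 * u ^ 4 * v ^ 4 * w ^ 4 *
        ((∑ t ∈ range N, (x * u * (y * v)) ^ t) * (∑ r ∈ range N, (y * v * (z * w)) ^ r) *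
          ∑ s ∈ range N, (x * u * (z * w)) ^ s) := by
    simp only [mul_sum, sum_mul]
    refine sum_congr rfl fun s _ => sum_congr rfl fun r _ => sum_congr rfl fun t _ => ?_
    ring
  have hxy : 1 - x - y = (1 - x * u * (y * v)) * (1 - x) * (1 - y) := by
    linear_combination (x * y * v * (1 - y)) * hu + x * y * hv
  have hxz : 1 - x - z = (1 - x * u * (z * w)) * (1 - x) * (1 - z) := by
    linear_combination (x * z * w * (1 - z)) * hu + x * z * hw
  have hyz : 1 - y - z = (1 - y * v * (z * w)) * (1 - y) * (1 - z) := by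
    linear_combination (y * z * w * (1 - z)) * hv + y * z * hw
  rw [hsum, hxy, hxz, hyz]
  calc
    _ = x ^ 3 * y ^ 3 * z ^ 3 * (u * (1 - x)) ^ 4 * (v * (1 - y)) ^ 4 * (w * (1 - z)) ^ 4 *
        (((∑ s ∈ range N, (x * u * (z * w)) ^ s) * (1 - x * u * (z * w))) *
          ((∑ r ∈ range N, (y * v * (z * w)) ^ r) * (1 - y * v * (z * w))) *
          ((∑ t ∈ range N, (x * u * (y * v)) ^ t) * (1 - x * u * (y * v)))) := by ring
    _ = _ := by rw [hu, hv, hw, geom_sum_mul_neg, geom_sum_mul_neg, geom_sum_mul_neg]; ring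

theorem sum_cube_choose_eq (b k h N : ℕ) (hN : b + k ≤ N) :
    ∑ s ∈ range N, ∑ r ∈ range N, ∑ t ∈ range N,
        b.choose (3 + t + s) * k.choose (3 + t + r) * h.choose (3 + s + r) =
      ∑ i ∈ range (b + k - 5), ∑ r ∈ range (i + 1), ∑ j ∈ range (b - 2 - r),
        b.choose (3 + r + j) * k.choose (3 + i + j - r) * h.choose (3 + i) := by
  have vanish : ∀ t s r, b + k - 5 ≤ s + r → b.choose (3 + t + s) * k.choose (3 + t + r) = 0 := by
    intro t s r hsr
    rcases lt_or_ge b (3 + t + s) with hb | hb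
    · rw [Nat.choose_eq_zero_of_lt hb, zero_mul]
    · rw [Nat.choose_eq_zero_of_lt (show k < 3 + t + r by omega), mul_zero]
  calc
    _ = ∑ s ∈ range (b + k - 5), ∑ r ∈ range (b + k - 5 - s), ∑ t ∈ range (b - 2 - s),
        b.choose (3 + t + s) * k.choose (3 + t + r) * h.choose (3 + s + r) := by
      rw [eventually_constant_sum (N := b + k - 5) ?_ (by omega)]
      · refine sum_congr rfl fun s _ => ?_
        rw [eventually_constant_sum (N := b + k - 5 - s) ?_ (by omega)]
        · refine sum_congr rfl fun r _ => eventually_constant_sum (fun t ht => ?_) (by omega)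
          rw [Nat.choose_eq_zero_of_lt (by omega), zero_mul, zero_mul]
        · exact fun r hr => sum_eq_zero fun t _ => by rw [vanish t s r (by omega), zero_mul]
      · exact fun s hs => sum_eq_zero fun r _ => sum_eq_zero fun t _ => by
          rw [vanish t s r (by omega), zero_mul]
    _ = ∑ i ∈ range (b + k - 5), ∑ r ∈ range (i + 1), ∑ t ∈ range (b - 2 - r),
        b.choose (3 + t + r) * k.choose (3 + t + (i - r)) * h.choose (3 + r + (i - r)) :=
      (sum_range_diag_flip _ fun s r => ∑ t ∈ range (b - 2 - s),
        b.choose (3 + t + s) * k.choose (3 + t + r) * h.choose (3 + s + r)).symm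
    _ = _ := by
      refine sum_congr rfl fun i _ => sum_congr rfl fun r hr => sum_congr rfl fun j _ => ?_
      have : r ≤ i := Nat.lt_succ_iff.mp (mem_range.mp hr)
      rw [show 3 + j + r = 3 + r + j by omega, show 3 + j + (i - r) = 3 + i + j - r by omega,
        show 3 + r + (i - r) = 3 + i by omega]

open MvPowerSeries

theorem coeff_X_cube_mul_inv_skewCrossDenom (d : Fin 3 →₀ ℕ) (N : ℕ) (h0 : d 0 < N)
    (h1 : d 1 < N) :
    coeff d (X 0 ^ 3 * X 1 ^ 3 * X 2 ^ 3 *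
        ((1 - X 0 - X 1) * (1 - X 0 - X 2) * (1 - X 1 - X 2) *
          (1 - X 0) ^ 2 * (1 - X 1) ^ 2 * (1 - X 2) ^ 2)⁻¹ : MvPowerSeries (Fin 3) ℚ) =
      ∑ s ∈ range N, ∑ r ∈ range N, ∑ t ∈ range N,
        ((d 0).choose (3 + t + s) * (d 1).choose (3 + t + r) * (d 2).choose (3 + s + r) : ℚ) := by
  set D : MvPowerSeries (Fin 3) ℚ := (1 - X 0 - X 1) * (1 - X 0 - X 2) * (1 - X 1 - X 2) *
    (1 - X 0) ^ 2 * (1 - X 1) ^ 2 * (1 - X 2) ^ 2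
  have hu (i : Fin 3) : (1 - X i : MvPowerSeries (Fin 3) ℚ)⁻¹ * (1 - X i) = 1 :=
    MvPowerSeries.inv_mul_cancel _ (by simp)
  have hD : constantCoeff D ≠ 0 := by simp [D]
  have hT (s r t : ℕ) :
      (X 0 ^ (3 + t + s) * (1 - X 0)⁻¹ ^ (3 + t + s + 1) : MvPowerSeries (Fin 3) ℚ) *
          (X 1 ^ (3 + t + r) * (1 - X 1)⁻¹ ^ (3 + t + r + 1)) *
          (X 2 ^ (3 + s + r) * (1 - X 2)⁻¹ ^ (3 + s + r + 1)) =
        pureTensor fun i => PowerSeries.chooseSeries (![3 + t + s, 3 + t + r, 3 + s + r] i) := by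
    rw [pureTensor_chooseSeries, Fin.prod_univ_three]
    rfl
  have hS := truncated_expansion_mul_skewCrossDenom (hu 0) (hu 1) (hu 2) N
  simp only [hT] at hS
  rw [← MvPowerSeries.eq_mul_inv_iff_mul_eq hD, mul_right_comm] at hS
  have hdvd (i : Fin 3) (v w : MvPowerSeries (Fin 3) ℚ) : X i ^ N ∣ (X i * v * w) ^ N := by
    rw [mul_assoc, mul_pow]
    exact dvd_mul_right _ _
  have htrunc := congrArg (coeff d) hS
  rw [← mul_assoc, ← mul_assoc, coeff_mul_one_sub_of_X_pow_dvd _ (hdvd 1 _ _) h1,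
    coeff_mul_one_sub_of_X_pow_dvd _ (hdvd 0 _ _) h0,
    coeff_mul_one_sub_of_X_pow_dvd _ (hdvd 0 _ _) h0] at htrunc
  rw [← htrunc]
  simp only [map_sum, coeff_pureTensor, PowerSeries.coeff_chooseSeries, Fin.prod_univ_three,
    Matrix.cons_val_zero, Matrix.cons_val_one, Matrix.cons_val]

theorem skew_cross_coeff_general (b k h : ℕ) :
    MvPowerSeries.coeff (R := ℚ)
        (Finsupp.single 0 b + Finsupp.single 1 k + Finsupp.single 2 h)
        (64 * X 0 ^ 3 * X 1 ^ 3 * X 2 ^ 3 *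
          ((1 - X 0 - X 1) * (1 - X 0 - X 2) * (1 - X 1 - X 2) *
            (1 - X 0) ^ 2 * (1 - X 1) ^ 2 * (1 - X 2) ^ 2)⁻¹ :
          MvPowerSeries (Fin 3) ℚ) =
      64 * ∑ i ∈ Finset.range (b + k - 5), ∑ r ∈ Finset.range (i + 1),
            ∑ j ∈ Finset.range (b - 2 - r),
              ((Nat.choose b (3 + r + j) * Nat.choose k (3 + i + j - r) *
                Nat.choose h (3 + i) : ℕ) : ℚ) := by
  have h64 (F : MvPowerSeries (Fin 3) ℚ) :
      64 * X 0 ^ 3 * X 1 ^ 3 * X 2 ^ 3 * F = C 64 * (X 0 ^ 3 * X 1 ^ 3 * X 2 ^ 3 * F) := by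
    rw [map_ofNat]; ring
  rw [h64, coeff_C_mul,
    coeff_X_cube_mul_inv_skewCrossDenom _ (b + k + 1) (by simp) (by simp)]
  simp only [Finsupp.coe_add, Pi.add_apply, Finsupp.single_apply, Fin.reduceEq, ↓reduceIte,
    add_zero, zero_add]
  exact_mod_cast congrArg (64 * ·) (sum_cube_choose_eq b k h (b + k + 1) (by omega))

/-- Coefficient extraction for the skew-cross generating function: for
`b, k, h ≥ 3`, the coefficient of `x^b y^k z^h` in
`64x³y³z³/((1-x-y)(1-x-z)(1-y-z)(1-x)²(1-y)²(1-z)²)` equals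
`64 Σ_{i=0}^{b+k-6} Σ_{r=0}^{i} Σ_{j=0}^{b-3-r} C(b,3+r+j) C(k,3+i+j-r) C(h,3+i)`. -/
theorem skew_cross_coeff (b k h : ℕ) (hb : 3 ≤ b) (hk : 3 ≤ k) (hh : 3 ≤ h) :
    MvPowerSeries.coeff (R := ℚ)
        (Finsupp.single 0 b + Finsupp.single 1 k + Finsupp.single 2 h)
        (64 * X 0 ^ 3 * X 1 ^ 3 * X 2 ^ 3 *
          ((1 - X 0 - X 1) * (1 - X 0 - X 2) * (1 - X 1 - X 2) *
            (1 - X 0) ^ 2 * (1 - X 1) ^ 2 * (1 - X 2) ^ 2)⁻¹ :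
          MvPowerSeries (Fin 3) ℚ) =
      64 * ∑ i ∈ Finset.range (b + k - 5), ∑ r ∈ Finset.range (i + 1),
            ∑ j ∈ Finset.range (b - 2 - r),
              ((Nat.choose b (3 + r + j) * Nat.choose k (3 + i + j - r) *
                Nat.choose h (3 + i) : ℕ) : ℚ) :=
  skew_cross_coeff_general b k h
end

section
/- Setting x=y=z in SC(x,y,z) = 64x³y³z³/((1-x-y)(1-x-z)(1-y-z)(1-x)²(1-y)²(1-z)²) gives SC(x) = 64x⁹/((1-2x)³(1-x)⁶), and the coefficient of x^{n+2} in SC(x) equals sc(n) where sc(n-2) = 2^{n+2}(n² - 27n + 194) - 8(n⁵/15 + 11n³/3 + 12n² + 844n/15 + 96). -/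
/-!
Write `D = (1 - 2x)³(1 - x)⁶ = ∑ dₖ xᵏ`. The closed form `F n = 2ⁿ⁺²(quadratic) - (quintic)` is
annihilated by the recurrence `∑ₖ dₖ F (n - k) = 0`, because `(1 - 2x)³` kills `2ⁿ` times a quadratic
and `(1 - x)⁶` kills a quintic. Moreover `F` vanishes at `n = 1, …, 8` and `F 9 = 64`, so the initial
terms also match and `x ∑_{n ≥ 0} F (n + 1) xⁿ = 64 x⁹ / D`: the formula is in fact the coefficient of
`xⁿ` in `SC(x)` for every `n ≥ 1`.
-/

open PowerSeries

/-- The one-variable skew-cross generating function (`x=y=z` in `SC(x,y,z)`). -/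
noncomputable def SC1 : PowerSeries ℚ :=
  64 * X ^ 9 * ((1 - 2 * X) ^ 3 * (1 - X) ^ 6)⁻¹

namespace PowerSeries

variable {R : Type*} [CommSemiring R]

theorem coeff_mul_sum_C_mul_X_pow (φ : R⟦X⟧) (c : ℕ → R) (N n : ℕ) :
    coeff n (φ * ∑ k ∈ Finset.range N, C (c k) * X ^ k) =
      ∑ k ∈ Finset.range N, if k ≤ n then c k * coeff (n - k) φ else 0 := by
  simp only [Finset.mul_sum, map_sum]
  refine Finset.sum_congr rfl fun k _ => ?_
  rw [mul_left_comm, coeff_C_mul, coeff_mul_X_pow', mul_ite, mul_zero]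

end PowerSeries

def sc1ClosedForm (n : ℕ) : ℚ :=
  2 ^ (n + 2) * ((n : ℚ) ^ 2 - 27 * n + 194) -
    8 * ((n : ℚ) ^ 5 / 15 + 11 * (n : ℚ) ^ 3 / 3 + 12 * (n : ℚ) ^ 2 + 844 * (n : ℚ) / 15 + 96)

theorem sc1Denominator_eq_sum :
    ((1 - 2 * X) ^ 3 * (1 - X) ^ 6 : ℚ⟦X⟧) =
      ∑ k ∈ Finset.range 10,
        C ([1, -12, 63, -190, 363, -456, 377, -198, 60, -8].getD k 0) * X ^ k := by
  simp only [Finset.sum_range_succ, Finset.sum_range_zero, List.getD_cons_succ,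
    List.getD_cons_zero, map_ofNat, map_neg, map_one]
  ring

theorem mk_sc1ClosedForm_succ_mul_denominator :
    mk (fun n => sc1ClosedForm (n + 1)) * ((1 - 2 * X) ^ 3 * (1 - X) ^ 6) = C 64 * X ^ 8 := by
  ext n
  rw [sc1Denominator_eq_sum, coeff_mul_sum_C_mul_X_pow, coeff_C_mul_X_pow]
  rcases lt_or_ge n 9 with hn | hn
  · interval_cases n <;> norm_num [Finset.sum_range_succ, sc1ClosedForm]
  · obtain ⟨m, rfl⟩ := Nat.exists_eq_add_of_le' hn
    simp only [Finset.sum_range_succ, Finset.sum_range_zero, List.getD_cons_succ,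
      List.getD_cons_zero, coeff_mk, le_add_iff_nonneg_left, zero_le, if_true, Nat.add_sub_cancel,
      sc1ClosedForm]
    push_cast
    ring

theorem SC1_eq_X_mul_mk_sc1ClosedForm : SC1 = X * mk (fun n => sc1ClosedForm (n + 1)) := by
  rw [SC1, eq_comm, eq_mul_inv_iff_mul_eq (by simp), mul_assoc,
    mk_sc1ClosedForm_succ_mul_denominator]
  simp only [map_ofNat]
  ring

/-- The number `sc(n-2)` of skew crosses of volume `n-2`, i.e. the coefficient of
`x^n` in `SC(x) = 64x⁹/((1-2x)³(1-x)⁶)`, equals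
`2^{n+2}(n²-27n+194) - 8(n⁵/15 + 11n³/3 + 12n² + 844n/15 + 96)` for `n ≥ 9`. -/
theorem skew_cross_volume_count (n : ℕ) (hn : 9 ≤ n) :
    PowerSeries.coeff n SC1 =
      2 ^ (n + 2) * ((n : ℚ) ^ 2 - 27 * n + 194) -
        8 * ((n : ℚ) ^ 5 / 15 + 11 * (n : ℚ) ^ 3 / 3 + 12 * (n : ℚ) ^ 2 +
          844 * (n : ℚ) / 15 + 96) := by
  obtain ⟨m, rfl⟩ := Nat.exists_eq_add_of_le' (by omega : 1 ≤ n)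
  rw [SC1_eq_X_mul_mk_sc1ClosedForm, coeff_succ_X_mul, coeff_mk, sc1ClosedForm]
end

section
/- The coefficient of x^{n+2} in x³(36x⁸+129x⁶-207x⁵+234x⁴-126x³+49x²-10x+1)/((1-3x)(1-2x)²(1-x)⁶), call it diag(n), satisfies diag(n-2) = (121/48)·3^n - 2^n(45n - 411) - (53n⁵/120 - 15n⁴/8 + 823n³/24 - 6n² + 22711n/60 + 4995/16) for n sufficiently large. -/
/-!
`diagClosedForm n` is an exponential polynomial `a·3ⁿ + (b n + c)·2ⁿ + q(n)` with `q` quintic, so it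
satisfies the linear recurrence with characteristic polynomial `(t - 3)(t - 2)²(t - 1)⁶`, whose
reversal is the denominator. Hence multiplying the generating series of `diagClosedForm (n + 3)` by
the denominator kills every coefficient of degree `≥ 9`, and the remaining nine coefficients are
those of the numerator. The shift by 3 (the factor `X³`) is needed because the closed form is not
the coefficient below `n = 3`.
-/

open PowerSeries

noncomputable def diagClosedForm (n : ℕ) : ℚ :=
  (121 / 48 : ℚ) * 3 ^ n - 2 ^ n * (45 * (n : ℚ) - 411) -
    (53 * (n : ℚ) ^ 5 / 120 - 15 * (n : ℚ) ^ 4 / 8 + 823 * (n : ℚ) ^ 3 / 24 -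
      6 * (n : ℚ) ^ 2 + 22711 * (n : ℚ) / 60 + 4995 / 16)

noncomputable def diagNumerator : ℚ⟦X⟧ :=
  36 * X ^ 8 + 129 * X ^ 6 - 207 * X ^ 5 + 234 * X ^ 4 - 126 * X ^ 3 + 49 * X ^ 2 - 10 * X + 1

noncomputable def diagDenominator : ℚ⟦X⟧ :=
  (1 - 3 * X) * (1 - 2 * X) ^ 2 * (1 - X) ^ 6

theorem diagClosedForm_recurrence (n : ℕ) :
    diagClosedForm (n + 9) - 13 * diagClosedForm (n + 8) + 73 * diagClosedForm (n + 7) -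
      233 * diagClosedForm (n + 6) + 467 * diagClosedForm (n + 5) -
      611 * diagClosedForm (n + 4) + 523 * diagClosedForm (n + 3) -
      283 * diagClosedForm (n + 2) + 88 * diagClosedForm (n + 1) - 12 * diagClosedForm n = 0 := by
  simp only [diagClosedForm, pow_succ]
  push_cast
  ring

theorem coeff_mul_C_mul_X_pow {R : Type*} [CommSemiring R] (φ : R⟦X⟧) (a : R) (k d : ℕ) :
    coeff d (φ * (C a * X ^ k)) = if k ≤ d then a * coeff (d - k) φ else 0 := by
  rw [mul_left_comm, coeff_C_mul, coeff_mul_X_pow']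
  split_ifs <;> simp

-- Every term has the shape `C a * X ^ k`, so that `coeff_mul_C_mul_X_pow` applies to each.
theorem diagDenominator_eq :
    diagDenominator =
      C 1 * X ^ 0 - C 13 * X ^ 1 + C 73 * X ^ 2 - C 233 * X ^ 3 + C 467 * X ^ 4 -
        C 611 * X ^ 5 + C 523 * X ^ 6 - C 283 * X ^ 7 + C 88 * X ^ 8 - C 12 * X ^ 9 := by
  simp only [diagDenominator, map_ofNat, map_one]
  ring

theorem mk_diagClosedForm_mul_diagDenominator :
    mk (fun n ↦ diagClosedForm (n + 3)) * diagDenominator = diagNumerator := by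
  ext n
  rw [diagDenominator_eq, diagNumerator]
  simp only [← map_ofNat (C (R := ℚ)), mul_sub, mul_add, map_sub, map_add, coeff_mul_C_mul_X_pow,
    coeff_mk, coeff_C_mul, coeff_X, coeff_one]
  rcases lt_or_ge n 9 with hn | hn
  · interval_cases n <;> norm_num [diagClosedForm]
  · obtain ⟨m, rfl⟩ := Nat.exists_eq_add_of_le' hn
    simp only [le_add_iff_nonneg_left, zero_le, ↓reduceIte, tsub_zero, one_mul,
      Nat.add_one_sub_one, Nat.reduceSubDiff, add_tsub_cancel_right, coeff_X_pow,
      Nat.reduceEqDiff, mul_zero, add_zero, sub_self, Nat.add_eq_zero_iff,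
      OfNat.ofNat_ne_zero, and_false]
    linear_combination diagClosedForm_recurrence (m + 3)

theorem diag_eq_X_pow_mul_mk :
    X ^ 3 * diagNumerator * diagDenominator⁻¹ = X ^ 3 * mk (fun n ↦ diagClosedForm (n + 3)) := by
  have hD : constantCoeff diagDenominator ≠ 0 := by simp [diagDenominator]
  refine ((eq_mul_inv_iff_mul_eq hD).mpr ?_).symm
  rw [mul_assoc, mk_diagClosedForm_mul_diagDenominator]

/-- Closed form for the number of 3D diagonal minimal inscribed polyominoes:
writing `Diag(x) = x³(36x⁸+129x⁶-207x⁵+234x⁴-126x³+49x²-10x+1)/((1-3x)(1-2x)²(1-x)⁶)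
 = Σ diag(m) x^{m+2}`, we have
`diag(n-2) = (121/48)·3ⁿ - 2ⁿ(45n-411) - (53n⁵/120 - 15n⁴/8 + 823n³/24 - 6n² + 22711n/60 + 4995/16)`,
i.e. the coefficient of `x^n` is the stated function of `n`, for `n` sufficiently
large (`n ≥ 3`). -/
theorem diag_count (n : ℕ) (hn : 3 ≤ n) :
    PowerSeries.coeff (R := ℚ) n
        (X ^ 3 * (36 * X ^ 8 + 129 * X ^ 6 - 207 * X ^ 5 + 234 * X ^ 4 -
            126 * X ^ 3 + 49 * X ^ 2 - 10 * X + 1) *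
          ((1 - 3 * X) * (1 - 2 * X) ^ 2 * (1 - X) ^ 6)⁻¹ : PowerSeries ℚ) =
      (121 / 48 : ℚ) * 3 ^ n - 2 ^ n * (45 * (n : ℚ) - 411) -
        (53 * (n : ℚ) ^ 5 / 120 - 15 * (n : ℚ) ^ 4 / 8 + 823 * (n : ℚ) ^ 3 / 24 -
          6 * (n : ℚ) ^ 2 + 22711 * (n : ℚ) / 60 + 4995 / 16) := by
  obtain ⟨m, rfl⟩ := Nat.exists_eq_add_of_le' hn
  change coeff (m + 3) (X ^ 3 * diagNumerator * diagDenominator⁻¹) = diagClosedForm (m + 3)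
  rw [diag_eq_X_pow_mul_mk, coeff_X_pow_mul, coeff_mk]
end

section
/- The coefficient of x^{n+2} in x³(72x^{10}+36x⁹+510x⁸-1117x⁷+1276x⁶-1155x⁵+710x⁴-293x³+81x²-13x+1)/((1-3x)(1-2x)³(1-x)⁷) equals (121·3^{n+1})/16 + 2^{n+2}(4n² - 125n + 741) + 3n⁶/40 - 9n⁵/10 - 7n⁴/2 - 133n³/2 - 1931n²/5 - 31727n/20 - 47739/16, for n sufficiently large. -/
/-!
Partial fractions: `48 P(x)` is `121/(1-3x)` plus combinations of `1/(1-2x)^{d+1}` (`d ≤ 2`) and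
`1/(1-x)^{d+1}` (`d ≤ 6`), plus a quadratic polynomial (the numerator has degree 13, the
denominator degree 11). Since `1/(1-ax)^{d+1}` has coefficients `a^m C(d+m, d)`, the coefficient
of `x^m` for `m ≥ 3`, where the polynomial part no longer contributes, is `121·3^m` plus `2^m` times a
quadratic in `m` plus a sextic in `m`.
-/

open PowerSeries Finset

namespace PowerSeries

variable {R : Type*} [CommRing R]

noncomputable def geomChoose (a : R) (d : ℕ) : R⟦X⟧ :=
  mk fun m => a ^ m * (d + m).choose d

@[simp]
lemma coeff_geomChoose (a : R) (d m : ℕ) :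
    coeff m (geomChoose a d) = a ^ m * (d + m).choose d :=
  coeff_mk _ _

lemma geomChoose_mul_one_sub_pow (a : R) (d : ℕ) :
    geomChoose a d * (1 - C a * X) ^ (d + 1) = 1 := by
  have h := congrArg (rescale a) (mk_add_choose_mul_one_sub_pow_eq_one R d)
  rwa [map_mul, map_pow, map_sub, map_one, rescale_X, rescale_mk] at h

end PowerSeries

lemma Nat.cast_add_choose_eq_prod_div {K : Type*} [Field K] [CharZero K] (d m : ℕ) :
    ((d + m).choose d : K) = (∏ i ∈ range d, ((m : K) + 1 + i)) / d.factorial := by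
  rw [eq_div_iff (Nat.cast_ne_zero.2 d.factorial_ne_zero), mul_comm, add_comm d m]
  have h := Nat.ascFactorial_eq_factorial_mul_choose m d
  rw [Nat.ascFactorial_eq_prod_range] at h
  exact_mod_cast h.symm

noncomputable def p3dMinPartialFractions : ℚ⟦X⟧ :=
  C 121 * geomChoose 3 0 +
    (C 55296 * geomChoose 2 0 - C 7344 * geomChoose 2 1 + C 384 * geomChoose 2 2) +
    (C 4077 * geomChoose 1 0 - C 80946 * geomChoose 1 1 + C 93348 * geomChoose 1 2 -
      C 94968 * geomChoose 1 3 + C 54720 * geomChoose 1 4 - C 19440 * geomChoose 1 5 +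
      C 2592 * geomChoose 1 6) -
    (C 7840 + C 1344 * X + C 144 * X ^ 2)

lemma p3dMinPartialFractions_mul_denom :
    p3dMinPartialFractions * ((1 - 3 * X) * (1 - 2 * X) ^ 3 * (1 - X) ^ 7) =
      48 * (X ^ 3 * (72 * X ^ 10 + 36 * X ^ 9 + 510 * X ^ 8 - 1117 * X ^ 7 +
        1276 * X ^ 6 - 1155 * X ^ 5 + 710 * X ^ 4 - 293 * X ^ 3 + 81 * X ^ 2 - 13 * X + 1)) := by
  have h3 (d : ℕ) := geomChoose_mul_one_sub_pow (3 : ℚ) d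
  have h2 (d : ℕ) := geomChoose_mul_one_sub_pow (2 : ℚ) d
  have h1 (d : ℕ) := geomChoose_mul_one_sub_pow (1 : ℚ) d
  unfold p3dMinPartialFractions
  simp only [map_ofNat, map_one, one_mul] at h3 h2 h1 ⊢
  linear_combination (norm := ring1)
    121 * (1 - 2 * X) ^ 3 * (1 - X) ^ 7 * h3 0 +
    (1 - 3 * X) * (1 - X) ^ 7 *
      (55296 * (1 - 2 * X) ^ 2 * h2 0 - 7344 * (1 - 2 * X) * h2 1 + 384 * h2 2) +
    (1 - 3 * X) * (1 - 2 * X) ^ 3 *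
      (4077 * (1 - X) ^ 6 * h1 0 - 80946 * (1 - X) ^ 5 * h1 1 + 93348 * (1 - X) ^ 4 * h1 2 -
        94968 * (1 - X) ^ 3 * h1 3 + 54720 * (1 - X) ^ 2 * h1 4 - 19440 * (1 - X) * h1 5 +
        2592 * h1 6)

lemma p3dMin_series_eq :
    (X ^ 3 * (72 * X ^ 10 + 36 * X ^ 9 + 510 * X ^ 8 - 1117 * X ^ 7 +
        1276 * X ^ 6 - 1155 * X ^ 5 + 710 * X ^ 4 - 293 * X ^ 3 + 81 * X ^ 2 - 13 * X + 1) *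
      ((1 - 3 * X) * (1 - 2 * X) ^ 3 * (1 - X) ^ 7)⁻¹ : ℚ⟦X⟧) =
      C 48⁻¹ * p3dMinPartialFractions := by
  refine ((eq_mul_inv_iff_mul_eq (by simp)).2 ?_).symm
  rw [mul_assoc, p3dMinPartialFractions_mul_denom, ← mul_assoc, ← map_ofNat C 48, ← map_mul,
    inv_mul_cancel₀ (by norm_num), map_one, one_mul]

/-- Closed form for the total number of minimal inscribed 3D polyominoes of a
given volume: the coefficient of `x^{n+2}` in
`x³(72x¹⁰+36x⁹+510x⁸-1117x⁷+1276x⁶-1155x⁵+710x⁴-293x³+81x²-13x+1)/((1-3x)(1-2x)³(1-x)⁷)`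
equals `121·3^{n+1}/16 + 2^{n+2}(4n²-125n+741) + 3n⁶/40 - 9n⁵/10 - 7n⁴/2 - 133n³/2
 - 1931n²/5 - 31727n/20 - 47739/16` for `n ≥ 1`. -/
theorem p3dmin_count (n : ℕ) (hn : 1 ≤ n) :
    PowerSeries.coeff (R := ℚ) (n + 2)
        (X ^ 3 * (72 * X ^ 10 + 36 * X ^ 9 + 510 * X ^ 8 - 1117 * X ^ 7 +
            1276 * X ^ 6 - 1155 * X ^ 5 + 710 * X ^ 4 - 293 * X ^ 3 +
            81 * X ^ 2 - 13 * X + 1) *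
          ((1 - 3 * X) * (1 - 2 * X) ^ 3 * (1 - X) ^ 7)⁻¹ : PowerSeries ℚ) =
      121 * 3 ^ (n + 1) / 16 + 2 ^ (n + 2) * (4 * (n : ℚ) ^ 2 - 125 * (n : ℚ) + 741) +
        3 * (n : ℚ) ^ 6 / 40 - 9 * (n : ℚ) ^ 5 / 10 - 7 * (n : ℚ) ^ 4 / 2 -
        133 * (n : ℚ) ^ 3 / 2 - 1931 * (n : ℚ) ^ 2 / 5 - 31727 * (n : ℚ) / 20 -
        47739 / 16 := by
  rw [p3dMin_series_eq, coeff_C_mul, p3dMinPartialFractions]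
  simp only [map_add, map_sub, coeff_C_mul, coeff_geomChoose, coeff_C, coeff_X, coeff_X_pow,
    Nat.cast_add_choose_eq_prod_div, prod_range_succ, prod_range_zero]
  simp (disch := omega) only [if_neg]
  push_cast
  ring
end

section
/- Every minimal 3D polyomino inscribed in a b×k×h prism (volume b+k+h-2) has the property that its orthogonal projection onto each face of the prism is a minimal 2D polyomino inscribed in the corresponding rectangle; conversely, if any projection fails to be a minimal 2D polyomino, the 3D polyomino is not minimal. -/
/-- Minimal 2D polyomino inscribed in a `b × k` rectangle (area `b + k - 1`). -/
def MinPoly2D (b k : ℕ) (P : Finset (ℕ × ℕ)) : Prop :=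
  P.Nonempty ∧ Connected2 P ∧ Inscribed2 b k P ∧ P.card = b + k - 1

/-- Face-adjacency of 3D cells. -/
def Adj3 (a b : ℕ × ℕ × ℕ) : Prop :=
  (a.1 = b.1 ∧ Adj2 a.2 b.2) ∨
  (a.2 = b.2 ∧ (a.1 + 1 = b.1 ∨ b.1 + 1 = a.1))

def Connected3 (P : Finset (ℕ × ℕ × ℕ)) : Prop :=
  ∀ a ∈ P, ∀ b ∈ P,
    Relation.ReflTransGen (fun u v => u ∈ P ∧ v ∈ P ∧ Adj3 u v) a b

def Inscribed3 (b k h : ℕ) (P : Finset (ℕ × ℕ × ℕ)) : Prop :=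
  (∀ c ∈ P, c.1 < b ∧ c.2.1 < k ∧ c.2.2 < h) ∧
  (∃ c ∈ P, c.1 = 0) ∧ (∃ c ∈ P, c.1 = b - 1) ∧
  (∃ c ∈ P, c.2.1 = 0) ∧ (∃ c ∈ P, c.2.1 = k - 1) ∧
  (∃ c ∈ P, c.2.2 = 0) ∧ (∃ c ∈ P, c.2.2 = h - 1)

/-- A (face-connected, inscribed) 3D polyomino in a `b × k × h` prism. -/
def Poly3D (b k h : ℕ) (P : Finset (ℕ × ℕ × ℕ)) : Prop :=
  P.Nonempty ∧ Connected3 P ∧ Inscribed3 b k h P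

section Aux

set_option linter.unusedSectionVars false

variable {V α : Type*} [DecidableEq V] [DecidableEq α]

lemma crossing (R : V → V → Prop) (g : V → ℕ)
    (hstep : ∀ u v, R u v → g u = g v ∨ g u + 1 = g v ∨ g v + 1 = g u)
    {t : ℕ} {a b : V} (hab : Relation.ReflTransGen R a b)
    (ha : g a < t) (hb : t ≤ g b) :
    ∃ u v, R u v ∧ g u + 1 = t ∧ g v = t := by
  induction hab with
  | refl => omega
  | tail hac hcb ih =>
    rename_i c d
    by_cases hc : t ≤ g c
    · exact ih hc
    · push_neg at hc
      rcases hstep _ _ hcb with h | h | h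
      · omega
      · exact ⟨c, d, hcb, by omega, by omega⟩
      · omega

lemma card_proj_le (P : Finset V) (R : V → V → Prop) (f : V → α) (g : V → ℕ)
    (hmem : ∀ u v, R u v → u ∈ P ∧ v ∈ P)
    (hconn : ∀ a ∈ P, ∀ b ∈ P, Relation.ReflTransGen R a b)
    (hstep : ∀ u v, R u v → g u = g v ∨ (f u = f v ∧ (g u + 1 = g v ∨ g v + 1 = g u)))
    (hinj : ∀ u v, f u = f v → g u = g v → u = v)
    (m : ℕ) (h0 : ∃ c ∈ P, g c = 0) (h1 : ∃ c ∈ P, g c = m - 1) :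
    (P.image f).card + (m - 1) ≤ P.card := by
  classical
  set D := P.filter (fun c => ∃ d ∈ P, f d = f c ∧ g d < g c) with hD
  have hDP : D ⊆ P := Finset.filter_subset _ _
  have himg : P.image f = (P \ D).image f := by
    apply Finset.Subset.antisymm
    · intro q hq
      rcases Finset.mem_image.mp hq with ⟨c, hc, hfc⟩
      have hne : (P.filter (fun x => f x = q)).Nonempty := ⟨c, Finset.mem_filter.mpr ⟨hc, hfc⟩⟩
      obtain ⟨e, he, hemin⟩ := Finset.exists_min_image _ g hne
      rcases Finset.mem_filter.mp he with ⟨heP, hef⟩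
      refine Finset.mem_image.mpr ⟨e, Finset.mem_sdiff.mpr ⟨heP, ?_⟩, hef⟩
      intro heD
      rcases Finset.mem_filter.mp heD with ⟨-, d, hd, hfd, hgd⟩
      have := hemin d (Finset.mem_filter.mpr ⟨hd, by rw [hfd, hef]⟩)
      omega
    · exact Finset.image_subset_image (Finset.sdiff_subset)
  have hinjD : Set.InjOn f (P \ D : Finset V) := by
    intro u hu v hv hf
    rcases Finset.mem_sdiff.mp hu with ⟨huP, huD⟩
    rcases Finset.mem_sdiff.mp hv with ⟨hvP, hvD⟩
    rcases lt_trichotomy (g u) (g v) with hlt | heq | hlt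
    · exact absurd (Finset.mem_filter.mpr ⟨hvP, u, huP, hf, hlt⟩) hvD
    · exact hinj u v hf heq
    · exact absurd (Finset.mem_filter.mpr ⟨huP, v, hvP, hf.symm, hlt⟩) huD
  have hcard1 : (P.image f).card = (P \ D).card := by
    rw [himg, Finset.card_image_of_injOn hinjD]
  have hIco : Finset.Ico 1 m ⊆ D.image g := by
    intro t ht
    rcases Finset.mem_Ico.mp ht with ⟨ht1, htm⟩
    obtain ⟨a0, ha0, hg0⟩ := h0
    obtain ⟨a1, ha1, hg1⟩ := h1
    have hpath := hconn a0 ha0 a1 ha1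
    have hstep' : ∀ u v, R u v → g u = g v ∨ g u + 1 = g v ∨ g v + 1 = g u := by
      intro u v huv
      rcases hstep u v huv with h | ⟨-, h⟩
      · exact Or.inl h
      · exact Or.inr h
    obtain ⟨u, v, huv, hgu, hgv⟩ := crossing R g hstep' (t := t) hpath (by omega) (by omega)
    obtain ⟨huP, hvP⟩ := hmem u v huv
    have hfu : f u = f v := by
      rcases hstep u v huv with h | ⟨h, -⟩
      · omega
      · exact h
    refine Finset.mem_image.mpr ⟨v, Finset.mem_filter.mpr ⟨hvP, u, huP, hfu, by omega⟩, hgv⟩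
  have hDcard : m - 1 ≤ D.card := by
    calc m - 1 = (Finset.Ico 1 m).card := by rw [Nat.card_Ico]
    _ ≤ (D.image g).card := Finset.card_le_card hIco
    _ ≤ D.card := Finset.card_image_le
  have := Finset.card_sdiff_add_card_eq_card hDP
  omega

end Aux

lemma lower2 (b k : ℕ) (Q : Finset (ℕ × ℕ)) (hc : Connected2 Q) (hi : Inscribed2 b k Q) :
    b + k - 1 ≤ Q.card := by
  classical
  obtain ⟨hbound, ⟨c0, hc0, hx0⟩, ⟨c1, hc1, hx1⟩, hy0, hy1⟩ := hi
  set R := fun u v : ℕ × ℕ => u ∈ Q ∧ v ∈ Q ∧ Adj2 u v with hR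
  have hupper : (Q.image Prod.fst).card + (k - 1) ≤ Q.card := by
    apply card_proj_le Q R Prod.fst Prod.snd
      (fun u v h => ⟨h.1, h.2.1⟩) hc
    · intro u v h
      rcases h.2.2 with ⟨h1, h2⟩ | ⟨h1, h2⟩
      · exact Or.inr ⟨h1, h2⟩
      · exact Or.inl h1
    · intro u v h1 h2; exact Prod.ext h1 h2
    · exact hy0
    · exact hy1
  have hbcard : b ≤ (Q.image Prod.fst).card := by
    have hsub : Finset.range b ⊆ Q.image Prod.fst := by
      intro t ht
      have htb : t < b := Finset.mem_range.mp ht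
      by_cases ht0 : t = 0
      · exact Finset.mem_image.mpr ⟨c0, hc0, by omega⟩
      · have hstep' : ∀ u v, R u v →
            u.1 = v.1 ∨ u.1 + 1 = v.1 ∨ v.1 + 1 = u.1 := by
          intro u v h
          rcases h.2.2 with ⟨h1, h2⟩ | ⟨h1, h2⟩
          · exact Or.inl h1
          · exact Or.inr h2
        obtain ⟨u, v, huv, hgu, hgv⟩ :=
          crossing R Prod.fst hstep' (t := t) (hc c0 hc0 c1 hc1) (by omega) (by omega)
        exact Finset.mem_image.mpr ⟨v, huv.2.1, hgv⟩
    calc b = (Finset.range b).card := (Finset.card_range b).symm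
    _ ≤ _ := Finset.card_le_card hsub
  omega

lemma conn_image (P : Finset (ℕ × ℕ × ℕ)) (hc : Connected3 P) (f : ℕ × ℕ × ℕ → ℕ × ℕ)
    (hf : ∀ u v, Adj3 u v → f u = f v ∨ Adj2 (f u) (f v)) :
    Connected2 (P.image f) := by
  have key : ∀ x y : ℕ × ℕ × ℕ,
      Relation.ReflTransGen (fun u v => u ∈ P ∧ v ∈ P ∧ Adj3 u v) x y →
      Relation.ReflTransGen
        (fun u v => u ∈ P.image f ∧ v ∈ P.image f ∧ Adj2 u v) (f x) (f y) := by
    intro x y hxy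
    induction hxy with
    | refl => exact .refl
    | tail hac hcb ih =>
      rcases hf _ _ hcb.2.2 with h | h
      · exact h ▸ ih
      · exact ih.tail ⟨Finset.mem_image_of_mem f hcb.1, Finset.mem_image_of_mem f hcb.2.1, h⟩
  intro a ha b hb
  rcases Finset.mem_image.mp ha with ⟨x, hx, rfl⟩
  rcases Finset.mem_image.mp hb with ⟨y, hy, rfl⟩
  exact key x y (hc x hx y hy)

lemma build_min (b k m : ℕ) (hb : 1 ≤ b) (hk : 1 ≤ k) (hm : 1 ≤ m)
    (P : Finset (ℕ × ℕ × ℕ)) (hne : P.Nonempty) (hc : Connected3 P)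
    (f : ℕ × ℕ × ℕ → ℕ × ℕ) (g : ℕ × ℕ × ℕ → ℕ)
    (hadj : ∀ u v, Adj3 u v → g u = g v ∨ (f u = f v ∧ (g u + 1 = g v ∨ g v + 1 = g u)))
    (hadj2 : ∀ u v, Adj3 u v → f u = f v ∨ Adj2 (f u) (f v))
    (hinj : ∀ u v : ℕ × ℕ × ℕ, f u = f v → g u = g v → u = v)
    (hins : Inscribed2 b k (P.image f))
    (h0 : ∃ c ∈ P, g c = 0) (h1 : ∃ c ∈ P, g c = m - 1)
    (hcard : P.card = b + k + m - 2) :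
    MinPoly2D b k (P.image f) := by
  have hconn2 : Connected2 (P.image f) := conn_image P hc f hadj2
  have hupper : (P.image f).card + (m - 1) ≤ P.card :=
    card_proj_le P _ f g (fun u v h => ⟨h.1, h.2.1⟩) hc
      (fun u v h => hadj u v h.2.2) hinj m h0 h1
  have hlower : b + k - 1 ≤ (P.image f).card := lower2 b k _ hconn2 hins
  exact ⟨hne.image f, hconn2, hins, by omega⟩

/-- A 3D polyomino inscribed in a `b × k × h` prism is minimal (volume
`b + k + h - 2`) only if each of its three orthogonal projections onto the faces
of the prism is a minimal 2D polyomino inscribed in the corresponding rectangle;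
equivalently (contrapositive), if some projection fails to be a minimal inscribed
2D polyomino then the 3D polyomino is not minimal. -/
theorem minimal_iff_projections_minimal (b k h : ℕ)
    (hb : 1 ≤ b) (hk : 1 ≤ k) (hh : 1 ≤ h)
    (P : Finset (ℕ × ℕ × ℕ)) (hP : Poly3D b k h P)
    (hmin : P.card = b + k + h - 2) :
    MinPoly2D b k (P.image fun c => (c.1, c.2.1)) ∧
    MinPoly2D b h (P.image fun c => (c.1, c.2.2)) ∧
    MinPoly2D k h (P.image fun c => (c.2.1, c.2.2)) := by
  obtain ⟨hne, hconn, hbound, w1, w2, w3, w4, w5, w6⟩ := hP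
  refine ⟨?_, ?_, ?_⟩
  · refine build_min b k h hb hk hh P hne hconn _ (fun c => c.2.2) ?_ ?_ ?_ ?_ w5 w6
      (by omega)
    · intro u v huv
      simp [Adj3, Adj2, Prod.ext_iff] at huv ⊢
      omega
    · intro u v huv
      simp [Adj3, Adj2, Prod.ext_iff] at huv ⊢
      omega
    · intro u v h1 h2
      simp only [Prod.mk.injEq] at h1
      exact Prod.ext h1.1 (Prod.ext h1.2 h2)
    · refine ⟨?_, ?_, ?_, ?_, ?_⟩
      · intro c hc
        rcases Finset.mem_image.mp hc with ⟨d, hd, rfl⟩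
        exact ⟨(hbound d hd).1, (hbound d hd).2.1⟩
      · obtain ⟨c, hc, hx⟩ := w1
        exact ⟨_, Finset.mem_image_of_mem _ hc, hx⟩
      · obtain ⟨c, hc, hx⟩ := w2
        exact ⟨_, Finset.mem_image_of_mem _ hc, hx⟩
      · obtain ⟨c, hc, hx⟩ := w3
        exact ⟨_, Finset.mem_image_of_mem _ hc, hx⟩
      · obtain ⟨c, hc, hx⟩ := w4
        exact ⟨_, Finset.mem_image_of_mem _ hc, hx⟩
  · refine build_min b h k hb hh hk P hne hconn _ (fun c => c.2.1) ?_ ?_ ?_ ?_ w3 w4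
      (by omega)
    · intro u v huv
      simp [Adj3, Adj2, Prod.ext_iff] at huv ⊢
      omega
    · intro u v huv
      simp [Adj3, Adj2, Prod.ext_iff] at huv ⊢
      omega
    · intro u v h1 h2
      simp only [Prod.mk.injEq] at h1
      exact Prod.ext h1.1 (Prod.ext h2 h1.2)
    · refine ⟨?_, ?_, ?_, ?_, ?_⟩
      · intro c hc
        rcases Finset.mem_image.mp hc with ⟨d, hd, rfl⟩
        exact ⟨(hbound d hd).1, (hbound d hd).2.2⟩
      · obtain ⟨c, hc, hx⟩ := w1
        exact ⟨_, Finset.mem_image_of_mem _ hc, hx⟩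
      · obtain ⟨c, hc, hx⟩ := w2
        exact ⟨_, Finset.mem_image_of_mem _ hc, hx⟩
      · obtain ⟨c, hc, hx⟩ := w5
        exact ⟨_, Finset.mem_image_of_mem _ hc, hx⟩
      · obtain ⟨c, hc, hx⟩ := w6
        exact ⟨_, Finset.mem_image_of_mem _ hc, hx⟩
  · refine build_min k h b hk hh hb P hne hconn _ (fun c => c.1) ?_ ?_ ?_ ?_ w1 w2
      (by omega)
    · intro u v huv
      simp [Adj3, Adj2, Prod.ext_iff] at huv ⊢
      omega
    · intro u v huv
      simp [Adj3, Adj2, Prod.ext_iff] at huv ⊢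
      omega
    · intro u v h1 h2
      simp only [Prod.mk.injEq] at h1
      exact Prod.ext h2 (Prod.ext h1.1 h1.2)
    · refine ⟨?_, ?_, ?_, ?_, ?_⟩
      · intro c hc
        rcases Finset.mem_image.mp hc with ⟨d, hd, rfl⟩
        exact ⟨(hbound d hd).2.1, (hbound d hd).2.2⟩
      · obtain ⟨c, hc, hx⟩ := w3
        exact ⟨_, Finset.mem_image_of_mem _ hc, hx⟩
      · obtain ⟨c, hc, hx⟩ := w4
        exact ⟨_, Finset.mem_image_of_mem _ hc, hx⟩
      · obtain ⟨c, hc, hx⟩ := w5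
        exact ⟨_, Finset.mem_image_of_mem _ hc, hx⟩
      · obtain ⟨c, hc, hx⟩ := w6
        exact ⟨_, Finset.mem_image_of_mem _ hc, hx⟩
end
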